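/- arXiv:1604.05009 — 2 statements merged into one kernel-verified Lean document; each statement's English description precedes it below -/
import Mathlib

section
/- For all a, b, c ∈ ℝ, |φ^β(a,b) − φ^β(a,c)| ≤ c_φ (1 + L |a − b|) |b − c|; in particular |φ^β(a,b) − φ^β(a,c)| ≤ C (1 + |a − b|) |b − c| with C = c_φ · max(1, L). -/
/-!
Split `∫_c^a β'(σ-c) g = ∫_c^b + ∫_b^a`. The difference of the two integrals over `[b, a]` has
integrand `(β'(σ-b) - β'(σ-c)) g σ`, of size at most `c_φ L |b-c|` by the Lipschitz bound on `β'`,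
and the leftover piece over `[b, c]` has integrand of size at most `c_φ`.
-/

open MeasureTheory

theorem abs_intervalIntegral_le_of_abs_le {f : ℝ → ℝ} {K : ℝ} (h : ∀ x, |f x| ≤ K) (a b : ℝ) :
    |∫ x in a..b, f x| ≤ K * |a - b| := by
  rw [abs_sub_comm]
  exact intervalIntegral.norm_integral_le_of_norm_le_const fun x _ =>
    (Real.norm_eq_abs _).trans_le (h x)

section ShiftedIntegral

variable {u g : ℝ → ℝ} {M L C : ℝ}

theorem intervalIntegrable_comp_sub_mul (hu : Measurable u) (hg : Measurable g)
    (huM : ∀ r, |u r| ≤ M) (hgC : ∀ σ, |g σ| ≤ C) (t a b : ℝ) :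
    IntervalIntegrable (fun σ => u (σ - t) * g σ) volume a b :=
  (intervalIntegrable_const (c := M * C)).mono_fun'
    ((hu.comp (measurable_sub_const t)).mul hg).aestronglyMeasurable
    (Filter.Eventually.of_forall fun σ => norm_mul_le_of_le (α := ℝ) (huM _) (hgC σ))

theorem integral_comp_sub_mul_sub_integral_comp_sub_mul (hu : Measurable u) (hg : Measurable g)
    (huM : ∀ r, |u r| ≤ M) (hgC : ∀ σ, |g σ| ≤ C) (a b c : ℝ) :
    (∫ σ in b..a, u (σ - b) * g σ) - ∫ σ in c..a, u (σ - c) * g σ =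
      (∫ σ in b..a, (u (σ - b) - u (σ - c)) * g σ) + ∫ σ in b..c, u (σ - c) * g σ := by
  have hint := intervalIntegrable_comp_sub_mul hu hg huM hgC
  have hsplit := intervalIntegral.integral_add_adjacent_intervals (hint c b c) (hint c c a)
  simp only [sub_mul]
  rw [intervalIntegral.integral_sub (hint b b a) (hint c b a)]
  linarith

theorem abs_integral_comp_sub_mul_sub_integral_comp_sub_mul_le (hu : Measurable u)
    (hg : Measurable g) (huM : ∀ r, |u r| ≤ M) (huL : ∀ x y, |u x - u y| ≤ L * |x - y|)
    (hgC : ∀ σ, |g σ| ≤ C) (a b c : ℝ) :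
    |(∫ σ in b..a, u (σ - b) * g σ) - ∫ σ in c..a, u (σ - c) * g σ|
      ≤ C * (M + L * |a - b|) * |b - c| := by
  have hdiff : |∫ σ in b..a, (u (σ - b) - u (σ - c)) * g σ| ≤ L * |b - c| * C * |b - a| := by
    refine abs_intervalIntegral_le_of_abs_le (fun σ => norm_mul_le_of_le (α := ℝ) ?_ (hgC σ)) b a
    refine (huL _ _).trans_eq ?_
    rw [sub_sub_sub_cancel_left, abs_sub_comm c b]
  have hrest : |∫ σ in b..c, u (σ - c) * g σ| ≤ M * C * |b - c| :=
    abs_intervalIntegral_le_of_abs_le (fun σ => norm_mul_le_of_le (α := ℝ) (huM _) (hgC σ)) b c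
  rw [integral_comp_sub_mul_sub_integral_comp_sub_mul hu hg huM hgC]
  calc _ ≤ |∫ σ in b..a, (u (σ - b) - u (σ - c)) * g σ| + |∫ σ in b..c, u (σ - c) * g σ| :=
        abs_add_le _ _
    _ ≤ L * |b - c| * C * |b - a| + M * C * |b - c| := add_le_add hdiff hrest
    _ = C * (M + L * |a - b|) * |b - c| := by rw [abs_sub_comm b a]; ring

end ShiftedIntegral

theorem one_add_mul_le_max_mul_one_add {L x : ℝ} (hx : 0 ≤ x) :
    1 + L * x ≤ max 1 L * (1 + x) := by
  nlinarith [le_max_left 1 L, le_max_right 1 L]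

theorem stmt3_general (cφ : ℝ)
    (g : ℝ → ℝ) (hg_meas : Measurable g)
    (hg0 : ∀ σ : ℝ, 0 ≤ g σ) (hgle : ∀ σ : ℝ, g σ ≤ cφ)
    (β : ℝ → ℝ) (hβ' : ∀ r : ℝ, |deriv β r| ≤ 1)
    (L : ℝ)
    (hβ'Lip : ∀ x y : ℝ, |deriv β x - deriv β y| ≤ L * |x - y|) :
    ∀ a b c : ℝ,
      |(∫ σ in b..a, deriv β (σ - b) * g σ) - ∫ σ in c..a, deriv β (σ - c) * g σ|
          ≤ cφ * (1 + L * |a - b|) * |b - c| ∧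
      |(∫ σ in b..a, deriv β (σ - b) * g σ) - ∫ σ in c..a, deriv β (σ - c) * g σ|
          ≤ (cφ * max 1 L) * (1 + |a - b|) * |b - c| := by
  intro a b c
  have hg : ∀ σ, |g σ| ≤ cφ := fun σ => (abs_of_nonneg (hg0 σ)).trans_le (hgle σ)
  have hcφ : 0 ≤ cφ := (hg0 0).trans (hgle 0)
  have main := abs_integral_comp_sub_mul_sub_integral_comp_sub_mul_le
    (measurable_deriv β) hg_meas hβ' hβ'Lip hg a b c
  refine ⟨main, main.trans ?_⟩
  calc cφ * (1 + L * |a - b|) * |b - c| ≤ cφ * (max 1 L * (1 + |a - b|)) * |b - c| := by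
        gcongr; exact one_add_mul_le_max_mul_one_add (abs_nonneg _)
    _ = cφ * max 1 L * (1 + |a - b|) * |b - c| := by ring

/-- With `0 ≤ g ≤ c_φ` measurable, `β` `C¹` with `|β'| ≤ 1` and `β'`
Lipschitz with constant `L`, and `φ^β(a,b) = ∫_b^a β'(σ-b) g σ dσ`, one has
`|φ^β(a,b) - φ^β(a,c)| ≤ c_φ (1 + L |a-b|) |b-c|`, and in particular
`|φ^β(a,b) - φ^β(a,c)| ≤ C (1 + |a-b|) |b-c|` with `C = c_φ * max 1 L`. -/
theorem stmt3 (cφ : ℝ) (hcφ : 0 < cφ)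
    (g : ℝ → ℝ) (hg_meas : Measurable g)
    (hg0 : ∀ σ : ℝ, 0 ≤ g σ) (hgle : ∀ σ : ℝ, g σ ≤ cφ)
    (β : ℝ → ℝ) (hβC1 : ContDiff ℝ 1 β) (hβ' : ∀ r : ℝ, |deriv β r| ≤ 1)
    (L : ℝ) (hL : 0 ≤ L)
    (hβ'Lip : ∀ x y : ℝ, |deriv β x - deriv β y| ≤ L * |x - y|) :
    ∀ a b c : ℝ,
      |(∫ σ in b..a, deriv β (σ - b) * g σ) - ∫ σ in c..a, deriv β (σ - c) * g σ|
          ≤ cφ * (1 + L * |a - b|) * |b - c| ∧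
      |(∫ σ in b..a, deriv β (σ - b) * g σ) - ∫ σ in c..a, deriv β (σ - c) * g σ|
          ≤ (cφ * max 1 L) * (1 + |a - b|) * |b - c| :=
  stmt3_general cφ g hg_meas hg0 hgle β hβ' L hβ'Lip
end

section
/- For all a, b ∈ ℝ, 2 I_β(a,b) + φ^β(a,b) + φ^β(b,a) ≤ M₂ |b − a| ω(ϑ)². -/
/-! With `k = β''`, one has `∫_a^μ k(μ - σ) dσ = β'(μ - a)`; together with the oddness of `β'` and
a swap of the order of integration over the triangle between `a` and `b`, this turns
`φ^β(a,b)` into `∫_a^b ∫_a^μ k(μ - σ) g(σ)² dσ dμ`, so that the left-hand side is the completed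
square `∫_a^b ∫_a^μ k(μ - σ) (g(σ) - g(μ))² dσ dμ`. As `k(μ - σ)` vanishes unless
`|μ - σ| ≤ ϑ`, the integrand is at most `k(μ - σ) ω(ϑ)²`, so the inner integral is at most
`|β'(μ - a)| ω(ϑ)² ≤ M₂ ω(ϑ)²`: `β'` is the integral of `k ≤ M₂/ϑ` over a length at most `ϑ`. -/

open MeasureTheory Set intervalIntegral
open scoped Interval

lemma integral_integral_triangle_swap_of_le {F : ℝ → ℝ → ℝ} (hF : Continuous F.uncurry)
    {a b : ℝ} (hab : a ≤ b) :
    ∫ μ in a..b, ∫ σ in a..μ, F μ σ = ∫ σ in a..b, ∫ μ in σ..b, F μ σ := by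
  set T : Set (ℝ × ℝ) := {p | a < p.2 ∧ p.2 ≤ p.1}
  have hT : MeasurableSet T :=
    (measurableSet_lt measurable_const measurable_snd).inter
      (measurableSet_le measurable_snd measurable_fst)
  have hint : IntegrableOn (T.indicator F.uncurry) (Ι a b ×ˢ Ι a b) :=
    ((hF.continuousOn.integrableOn_compact (isCompact_Icc.prod isCompact_Icc)).mono_set
      (prod_mono uIoc_subset_uIcc uIoc_subset_uIcc)).indicator hT
  have inner_left : ∀ μ ∈ Ι a b,
      ∫ σ in a..b, T.indicator F.uncurry (μ, σ) = ∫ σ in a..μ, F μ σ := by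
    intro μ hμ
    rw [uIoc_of_le hab] at hμ
    have : ∀ σ, T.indicator F.uncurry (μ, σ) = (Ioc a μ).indicator (F μ) σ := fun σ => rfl
    simp only [this, integral_of_le hab, integral_of_le hμ.1.le,
      setIntegral_indicator measurableSet_Ioc,
      inter_eq_self_of_subset_right (Ioc_subset_Ioc_right hμ.2)]
  have inner_right : ∀ σ ∈ Ι a b,
      ∫ μ in a..b, T.indicator F.uncurry (μ, σ) = ∫ μ in σ..b, F μ σ := by
    intro σ hσ
    rw [uIoc_of_le hab] at hσ
    have : ∀ μ, T.indicator F.uncurry (μ, σ) = (Ici σ).indicator (F · σ) μ := by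
      intro μ
      simp [T, indicator, hσ.1]
    have hset : Ioc a b ∩ Ici σ = Icc σ b := by
      ext μ
      simp only [mem_inter_iff, mem_Ioc, mem_Ici, mem_Icc]
      exact ⟨fun h => ⟨h.2, h.1.2⟩, fun h => ⟨⟨hσ.1.trans_le h.1, h.2⟩, h.1⟩⟩
    simp only [this, integral_of_le hab, integral_of_le hσ.2,
      setIntegral_indicator measurableSet_Ici, hset, integral_Icc_eq_integral_Ioc]
  calc ∫ μ in a..b, ∫ σ in a..μ, F μ σ
      = ∫ μ in a..b, ∫ σ in a..b, T.indicator F.uncurry (μ, σ) :=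
        (integral_congr_ae (.of_forall inner_left)).symm
    _ = ∫ σ in a..b, ∫ μ in a..b, T.indicator F.uncurry (μ, σ) :=
        intervalIntegral_intervalIntegral_swap hint
    _ = ∫ σ in a..b, ∫ μ in σ..b, F μ σ := integral_congr_ae (.of_forall inner_right)

lemma integral_integral_triangle_swap {F : ℝ → ℝ → ℝ} (hF : Continuous F.uncurry) (a b : ℝ) :
    ∫ μ in a..b, ∫ σ in a..μ, F μ σ = ∫ σ in a..b, ∫ μ in σ..b, F μ σ := by
  rcases le_total a b with hab | hba
  · exact integral_integral_triangle_swap_of_le hF hab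
  · have hF' : Continuous (fun p : ℝ × ℝ => F p.2 p.1) := hF.comp continuous_swap
    have h := integral_integral_triangle_swap_of_le (F := fun σ μ => F μ σ) hF' hba
    have h1 : ∀ μ, ∫ σ in a..μ, F μ σ = -∫ σ in μ..a, F μ σ := fun μ => integral_symm _ _
    have h2 : ∀ σ, ∫ μ in σ..b, F μ σ = -∫ μ in b..σ, F μ σ := fun σ => integral_symm _ _
    simp only [h1, h2, intervalIntegral.integral_neg, integral_symm b a, neg_neg]
    exact h.symm

lemma odd_deriv_of_even {β : ℝ → ℝ} (h : ∀ r, β (-r) = β r) (r : ℝ) :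
    deriv β (-r) = -deriv β r := by
  have := deriv_comp_neg (f := β) (x := -r)
  simp only [neg_neg, h] at this
  linarith

lemma continuous_integral_comp_sub_mul {k h : ℝ → ℝ} (hk : Continuous k) (hh : Continuous h)
    (a : ℝ) : Continuous fun μ => ∫ σ in a..μ, k (μ - σ) * h σ :=
  continuous_parametric_intervalIntegral_of_continuous
    ((hk.comp (continuous_fst.sub continuous_snd)).mul (hh.comp continuous_snd)) continuous_id

lemma mul_sq_sub_le_mul_sq_modulus {k g ω : ℝ → ℝ} {ϑ : ℝ} (hk0 : ∀ r, 0 ≤ k r)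
    (hsupp : ∀ r, ϑ < |r| → k r = 0) (hω_mono : MonotoneOn ω (Ici 0))
    (hω_mod : ∀ x y, |g x - g y| ≤ ω |x - y|) (μ σ : ℝ) :
    k (μ - σ) * (g σ - g μ) ^ 2 ≤ k (μ - σ) * ω ϑ ^ 2 := by
  by_cases h : |μ - σ| ≤ ϑ
  · have hg : |g σ - g μ| ≤ ω ϑ := by
      rw [abs_sub_comm] at h
      exact (hω_mod σ μ).trans (hω_mono (abs_nonneg (σ - μ)) ((abs_nonneg _).trans h) h)
    exact mul_le_mul_of_nonneg_left (sq_le_sq.2 (hg.trans (le_abs_self _))) (hk0 _)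
  · simp [hsupp _ (not_le.1 h)]

section Kernel

variable {f : ℝ → ℝ}

lemma integral_deriv_comp_sub_left (hf : Differentiable ℝ f) (hf' : Continuous (deriv f))
    (a μ : ℝ) : ∫ σ in a..μ, deriv f (μ - σ) = f (μ - a) - f 0 := by
  rw [integral_comp_sub_left (deriv f) μ, sub_self,
    integral_deriv_eq_sub (fun x _ => hf x) (hf'.intervalIntegrable _ _)]

lemma integral_deriv_comp_sub_right (hf : Differentiable ℝ f) (hf' : Continuous (deriv f))
    (σ b : ℝ) : ∫ μ in σ..b, deriv f (μ - σ) = f (b - σ) - f 0 := by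
  rw [integral_comp_sub_right (deriv f) σ, sub_self,
    integral_deriv_eq_sub (fun x _ => hf x) (hf'.intervalIntegrable _ _)]

lemma abs_le_of_deriv_le_of_support {ϑ M : ℝ} (hf : Differentiable ℝ f)
    (hf' : Continuous (deriv f)) (hodd : ∀ r, f (-r) = -f r) (hϑ : 0 < ϑ)
    (h0 : ∀ r, 0 ≤ deriv f r) (hle : ∀ r, deriv f r ≤ M / ϑ)
    (hsupp : ∀ r, ϑ < |r| → deriv f r = 0) (r : ℝ) : |f r| ≤ M := by
  have hf0 : f 0 = 0 := CharZero.eq_neg_self_iff.1 (by simpa using hodd 0)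
  have hFTC : ∀ x y, f y - f x = ∫ t in x..y, deriv f t := fun x y =>
    (integral_deriv_eq_sub (fun t _ => hf t) (hf'.intervalIntegrable x y)).symm
  have hnear : ∀ c ∈ Icc 0 ϑ, |f c| ≤ M := by
    intro c hc
    calc |f c| = |∫ t in 0..c, deriv f t| := by rw [← hFTC, hf0, sub_zero]
      _ ≤ M / ϑ * |c - 0| := intervalIntegral.norm_integral_le_of_norm_le_const fun x _ => by
          rw [Real.norm_eq_abs, abs_of_nonneg (h0 x)]; exact hle x
      _ ≤ M / ϑ * ϑ := by
          gcongr
          · exact (h0 0).trans (hle 0)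
          · rw [sub_zero, abs_of_nonneg hc.1]; exact hc.2
      _ = M := div_mul_cancel₀ _ hϑ.ne'
  have hfar : ∀ x, ϑ ≤ x → f x = f ϑ := by
    intro x hx
    rw [← sub_eq_zero, hFTC]
    refine integral_zero_ae (.of_forall fun t ht => hsupp t ?_)
    rw [uIoc_of_le hx] at ht
    exact ht.1.trans_le (le_abs_self t)
  have hpos : ∀ r, 0 ≤ r → |f r| ≤ M := by
    intro r hr
    rcases le_total r ϑ with h | h
    · exact hnear r ⟨hr, h⟩
    · rw [hfar r h]; exact hnear ϑ ⟨hϑ.le, le_rfl⟩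
  rcases le_total 0 r with hr | hr
  · exact hpos r hr
  · simpa [hodd] using hpos (-r) (neg_nonneg.2 hr)

lemma integral_integral_deriv_mul_sq_sub_eq (hf : Differentiable ℝ f)
    (hf' : Continuous (deriv f)) (hodd : ∀ r, f (-r) = -f r) {g : ℝ → ℝ} (hg : Continuous g)
    (a b : ℝ) :
    ∫ μ in a..b, ∫ σ in a..μ, deriv f (μ - σ) * (g σ - g μ) ^ 2
      = 2 * (∫ μ in a..b, (∫ σ in μ..a, deriv f (μ - σ) * g σ) * g μ)
          + (∫ σ in b..a, f (σ - b) * (g σ) ^ 2)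
          + (∫ σ in a..b, f (σ - a) * (g σ) ^ 2) := by
  have hf0 : f 0 = 0 := CharZero.eq_neg_self_iff.1 (by simpa using hodd 0)
  have hfc := hf.continuous
  have hP := continuous_integral_comp_sub_mul hf' hg a
  have hQ := continuous_integral_comp_sub_mul hf' (hg.pow 2) a
  have expand : ∀ μ, ∫ σ in a..μ, deriv f (μ - σ) * (g σ - g μ) ^ 2
      = (∫ σ in a..μ, deriv f (μ - σ) * g σ ^ 2)
        - 2 * (g μ * ∫ σ in a..μ, deriv f (μ - σ) * g σ) + f (μ - a) * g μ ^ 2 := by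
    intro μ
    calc ∫ σ in a..μ, deriv f (μ - σ) * (g σ - g μ) ^ 2
        = ∫ σ in a..μ, (deriv f (μ - σ) * g σ ^ 2 - 2 * g μ * (deriv f (μ - σ) * g σ)
            + g μ ^ 2 * deriv f (μ - σ)) := integral_congr fun σ _ => by ring
      _ = _ := by
        rw [intervalIntegral.integral_add, intervalIntegral.integral_sub,
          intervalIntegral.integral_const_mul, intervalIntegral.integral_const_mul,
          integral_deriv_comp_sub_left hf hf', hf0, sub_zero]
        · ring
        all_goals exact Continuous.intervalIntegrable (by fun_prop) _ _
  have swap : ∫ μ in a..b, ∫ σ in a..μ, deriv f (μ - σ) * g σ ^ 2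
      = ∫ σ in b..a, f (σ - b) * g σ ^ 2 := by
    rw [integral_integral_triangle_swap (F := fun μ σ => deriv f (μ - σ) * g σ ^ 2)
      (by fun_prop) a b, integral_symm b a, ← intervalIntegral.integral_neg]
    refine integral_congr fun σ _ => ?_
    simp only [intervalIntegral.integral_mul_const, integral_deriv_comp_sub_right hf hf', hf0]
    rw [show b - σ = -(σ - b) by ring, hodd]
    ring
  have cross : ∫ μ in a..b, (∫ σ in μ..a, deriv f (μ - σ) * g σ) * g μ
      = -∫ μ in a..b, g μ * ∫ σ in a..μ, deriv f (μ - σ) * g σ := by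
    rw [← intervalIntegral.integral_neg]
    exact integral_congr fun μ _ => by rw [integral_symm a μ]; ring
  rw [integral_congr fun μ _ => expand μ, intervalIntegral.integral_add,
    intervalIntegral.integral_sub, intervalIntegral.integral_const_mul, swap, cross]
  · ring
  all_goals exact Continuous.intervalIntegrable (by fun_prop) _ _

lemma abs_integral_deriv_mul_sq_sub_le {ϑ M : ℝ} (hf : Differentiable ℝ f)
    (hf' : Continuous (deriv f)) (hodd : ∀ r, f (-r) = -f r) (hϑ : 0 < ϑ)
    (h0 : ∀ r, 0 ≤ deriv f r) (hle : ∀ r, deriv f r ≤ M / ϑ)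
    (hsupp : ∀ r, ϑ < |r| → deriv f r = 0) {g ω : ℝ → ℝ}
    (hω_mono : MonotoneOn ω (Ici 0)) (hω_mod : ∀ x y, |g x - g y| ≤ ω |x - y|) (a μ : ℝ) :
    |∫ σ in a..μ, deriv f (μ - σ) * (g σ - g μ) ^ 2| ≤ M * ω ϑ ^ 2 := by
  have hf0 : f 0 = 0 := CharZero.eq_neg_self_iff.1 (by simpa using hodd 0)
  calc |∫ σ in a..μ, deriv f (μ - σ) * (g σ - g μ) ^ 2|
      ≤ |∫ σ in a..μ, deriv f (μ - σ) * ω ϑ ^ 2| := by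
        have hint : IntervalIntegrable (fun σ => deriv f (μ - σ) * ω ϑ ^ 2) volume a μ :=
          Continuous.intervalIntegrable (by fun_prop) _ _
        refine norm_integral_le_abs_of_norm_le
          (f := fun σ => deriv f (μ - σ) * (g σ - g μ) ^ 2) (.of_forall fun σ => ?_) hint
        rw [Real.norm_eq_abs, abs_of_nonneg (mul_nonneg (h0 _) (sq_nonneg _))]
        exact mul_sq_sub_le_mul_sq_modulus h0 hsupp hω_mono hω_mod μ σ
    _ = |f (μ - a)| * ω ϑ ^ 2 := by
        rw [intervalIntegral.integral_mul_const, integral_deriv_comp_sub_left hf hf', hf0,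
          sub_zero, abs_mul, abs_sq]
    _ ≤ M * ω ϑ ^ 2 := by
        gcongr
        exact abs_le_of_deriv_le_of_support hf hf' hodd hϑ h0 hle hsupp _

end Kernel

theorem stmt6_general (ϑ M₂ : ℝ) (hϑ : 0 < ϑ)
    (β : ℝ → ℝ) (hβC2 : ContDiff ℝ 2 β) (hβeven : ∀ r : ℝ, β (-r) = β r)
    (hβ''0 : ∀ r : ℝ, 0 ≤ deriv (deriv β) r)
    (hβ''le : ∀ r : ℝ, deriv (deriv β) r ≤ M₂ / ϑ)
    (hβ''supp : ∀ r : ℝ, ϑ < |r| → deriv (deriv β) r = 0)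
    (g : ℝ → ℝ) (hg : Continuous g)
    (ω : ℝ → ℝ)
    (hω_mono : MonotoneOn ω (Set.Ici 0))
    (hω_mod : ∀ x y : ℝ, |g x - g y| ≤ ω |x - y|) :
    ∀ a b : ℝ,
      2 * (∫ μ in a..b, (∫ σ in μ..a, deriv (deriv β) (μ - σ) * g σ) * g μ)
          + (∫ σ in b..a, deriv β (σ - b) * (g σ) ^ 2)
          + (∫ σ in a..b, deriv β (σ - a) * (g σ) ^ 2)
        ≤ M₂ * |b - a| * (ω ϑ) ^ 2 := by
  intro a b
  have hβ' : ContDiff ℝ 1 (deriv β) := (contDiff_succ_iff_deriv (n := 1).1 hβC2).2.2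
  have hd := hβ'.differentiable one_ne_zero
  have hc := hβ'.continuous_deriv le_rfl
  have hodd := odd_deriv_of_even hβeven
  rw [← integral_integral_deriv_mul_sq_sub_eq hd hc hodd hg]
  calc _ ≤ ‖∫ μ in a..b, ∫ σ in a..μ, deriv (deriv β) (μ - σ) * (g σ - g μ) ^ 2‖ :=
        le_abs_self _
    _ ≤ M₂ * ω ϑ ^ 2 * |b - a| := intervalIntegral.norm_integral_le_of_norm_le_const fun μ _ =>
        abs_integral_deriv_mul_sq_sub_le hd hc hodd hϑ hβ''0 hβ''le hβ''supp hω_mono hω_mod a μ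
    _ = M₂ * |b - a| * ω ϑ ^ 2 := by ring

/-- Let `ϑ > 0`, `M₂ > 0`, `β` `C²` and even with `0 ≤ β'' ≤ M₂/ϑ` and
`β'' = 0` outside `[-ϑ, ϑ]`; let `g` be continuous with modulus of continuity `ω`.
With `I_β(a,b) = ∫_a^b (∫_μ^a β''(μ-σ) g σ dσ) g μ dμ` and
`φ^β(a,b) = ∫_b^a β'(σ-b) (g σ)² dσ`, one has
`2 I_β(a,b) + φ^β(a,b) + φ^β(b,a) ≤ M₂ |b - a| ω(ϑ)²`. -/
theorem stmt6 (ϑ M₂ : ℝ) (hϑ : 0 < ϑ) (hM₂ : 0 < M₂)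
    (β : ℝ → ℝ) (hβC2 : ContDiff ℝ 2 β) (hβeven : ∀ r : ℝ, β (-r) = β r)
    (hβ''0 : ∀ r : ℝ, 0 ≤ deriv (deriv β) r)
    (hβ''le : ∀ r : ℝ, deriv (deriv β) r ≤ M₂ / ϑ)
    (hβ''supp : ∀ r : ℝ, ϑ < |r| → deriv (deriv β) r = 0)
    (g : ℝ → ℝ) (hg : Continuous g)
    (ω : ℝ → ℝ) (hω_nonneg : ∀ t : ℝ, 0 ≤ t → 0 ≤ ω t)
    (hω_mono : MonotoneOn ω (Set.Ici 0))
    (hω_mod : ∀ x y : ℝ, |g x - g y| ≤ ω |x - y|) :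
    ∀ a b : ℝ,
      2 * (∫ μ in a..b, (∫ σ in μ..a, deriv (deriv β) (μ - σ) * g σ) * g μ)
          + (∫ σ in b..a, deriv β (σ - b) * (g σ) ^ 2)
          + (∫ σ in a..b, deriv β (σ - a) * (g σ) ^ 2)
        ≤ M₂ * |b - a| * (ω ϑ) ^ 2 :=
  stmt6_general ϑ M₂ hϑ β hβC2 hβeven hβ''0 hβ''le hβ''supp g hg ω hω_mono hω_mod
end
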